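/- arXiv:1211.5711 — 6 statements merged into one kernel-verified Lean document; each statement's English description precedes it below -/
import Mathlib

section
/- For p ≠ q, x, y > 0, and strict inequality x ≠ y, the Gini mean satisfies min(x,y) < G_{p,q}(x,y) < max(x,y), i.e., G_{p,q} is a strict mean. -/
noncomputable def gini (p q x y : ℝ) : ℝ := ((x ^ p + y ^ p) / (x ^ q + y ^ q)) ^ (1 / (p - q))

lemma gini_xy_comm (p q x y : ℝ) : gini p q x y = gini p q y x := by
  unfold gini; rw [add_comm (x ^ p), add_comm (x ^ q)]

lemma gini_pq_comm (p q x y : ℝ) (hx : 0 < x) (hy : 0 < y) :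
    gini p q x y = gini q p x y := by
  unfold gini
  have hA : (0:ℝ) < x ^ p + y ^ p := by positivity
  have hB : (0:ℝ) < x ^ q + y ^ q := by positivity
  rw [show (1:ℝ)/(q-p) = -(1/(p-q)) by rw [show q-p = -(p-q) by ring, div_neg],
    Real.rpow_neg (div_nonneg hB.le hA.le), ← Real.inv_rpow (div_nonneg hB.le hA.le), inv_div]

lemma gini_core (p q : ℝ) (h : q < p) (x y : ℝ) (hx : 0 < x) (hy : 0 < y) (hxy : x < y) :
    x < gini p q x y ∧ gini p q x y < y := by
  have hr : 0 < p - q := by linarith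
  have hxq : (0:ℝ) < x ^ q := Real.rpow_pos_of_pos hx q
  have hyq : (0:ℝ) < y ^ q := Real.rpow_pos_of_pos hy q
  have hxp : x ^ p = x ^ q * x ^ (p-q) := by rw [← Real.rpow_add hx]; ring_nf
  have hyp : y ^ p = y ^ q * y ^ (p-q) := by rw [← Real.rpow_add hy]; ring_nf
  have hlt : x ^ (p-q) < y ^ (p-q) := Real.rpow_lt_rpow hx.le hxy hr
  have hBpos : (0:ℝ) < x ^ q + y ^ q := by positivity
  have h1 : x ^ (p-q) * (x ^ q + y ^ q) < x ^ p + y ^ p := by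
    rw [hxp, hyp]; nlinarith
  have h2 : x ^ p + y ^ p < y ^ (p-q) * (x ^ q + y ^ q) := by
    rw [hxp, hyp]; nlinarith
  have hR1 : x ^ (p-q) < (x ^ p + y ^ p) / (x ^ q + y ^ q) := (lt_div_iff₀ hBpos).mpr h1
  have hR2 : (x ^ p + y ^ p) / (x ^ q + y ^ q) < y ^ (p-q) := (div_lt_iff₀ hBpos).mpr h2
  have hinv : (0:ℝ) < 1/(p-q) := by positivity
  have hxb : (x ^ (p-q)) ^ (1/(p-q)) = x := by
    rw [← Real.rpow_mul hx.le, mul_one_div, div_self hr.ne', Real.rpow_one]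
  have hyb : (y ^ (p-q)) ^ (1/(p-q)) = y := by
    rw [← Real.rpow_mul hy.le, mul_one_div, div_self hr.ne', Real.rpow_one]
  constructor
  · have := Real.rpow_lt_rpow (Real.rpow_pos_of_pos hx _).le hR1 hinv
    rwa [hxb] at this
  · have hRnn : (0:ℝ) ≤ (x ^ p + y ^ p) / (x ^ q + y ^ q) := by positivity
    have := Real.rpow_lt_rpow hRnn hR2 hinv
    rwa [hyb] at this

theorem gini_is_strict_mean (p q : ℝ) (hpq : p ≠ q) (x y : ℝ) (hx : 0 < x) (hy : 0 < y)
    (hxy : x ≠ y) :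
    min x y < gini p q x y ∧ gini p q x y < max x y := by
  have key : ∀ a b : ℝ, 0 < a → 0 < b → a < b → a < gini p q a b ∧ gini p q a b < b := by
    intro a b ha hb hab
    rcases lt_or_gt_of_ne hpq with hpq' | hpq'
    · rw [gini_pq_comm p q a b ha hb]; exact gini_core q p hpq' a b ha hb hab
    · exact gini_core p q hpq' a b ha hb hab
  rcases lt_or_gt_of_ne hxy with h | h
  · rw [min_eq_left h.le, max_eq_right h.le]; exact key x y hx hy h
  · rw [min_eq_right h.le, max_eq_left h.le, gini_xy_comm]; exact key y x hy hx h
end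

section
/- Let u, v be real numbers with u ≠ 0. Then for all positive reals x, y, the identity ((x^{u+v} + y^{u+v})/(2(x^v + y^v))) + ((x^{u-v} + y^{u-v})/(2(x^{-v} + y^{-v}))) = (x^u + y^u)/2 holds; equivalently, G_{u,0}(G_{u+v,v}(x,y), G_{u-v,-v}(x,y)) = G_{u,0}(x,y) whenever the parameters in each pair are distinct. -/
/-!
Raised to the power `u`, `G_{u+v,v}(x,y)` is the mean of `x^u, y^u` with weights `x^v, y^v`, and
`G_{u-v,-v}(x,y)` the mean with weights `x^{-v}, y^{-v}`, which are proportional to `y^v, x^v`.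
Two means with swapped weights add up to `x^u + y^u`, so their power mean of order `u` is that of
`x` and `y`.
-/

open Real

theorem gini_rpow_sub {p q x y : ℝ} (hpq : p ≠ q) (hx : 0 ≤ x) (hy : 0 ≤ y) :
    gini p q x y ^ (p - q) = (x ^ p + y ^ p) / (x ^ q + y ^ q) := by
  rw [gini, ← rpow_mul (by positivity), one_div, inv_mul_cancel₀ (sub_ne_zero.2 hpq), rpow_one]

theorem gini_zero_right (p x y : ℝ) : gini p 0 x y = ((x ^ p + y ^ p) / 2) ^ (1 / p) := by
  rw [gini, rpow_zero, rpow_zero, sub_zero, one_add_one_eq_two]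

theorem weighted_mean_add_weighted_mean_inv {A B s t : ℝ} (hs : s ≠ 0) (ht : t ≠ 0)
    (hst : s + t ≠ 0) :
    (A * s + B * t) / (s + t) + (A * s⁻¹ + B * t⁻¹) / (s⁻¹ + t⁻¹) = A + B := by
  have hinv : (A * s⁻¹ + B * t⁻¹) / (s⁻¹ + t⁻¹) = (A * t + B * s) / (s + t) := by
    rw [inv_add_inv hs ht, div_div_eq_mul_div]
    field_simp
  rw [hinv, ← add_div, div_eq_iff hst]
  ring

theorem rpow_add_div_add_rpow_sub_div_add (u v : ℝ) {x y : ℝ} (hx : 0 < x) (hy : 0 < y) :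
    (x ^ (u + v) + y ^ (u + v)) / (x ^ v + y ^ v) +
      (x ^ (u - v) + y ^ (u - v)) / (x ^ (-v) + y ^ (-v)) = x ^ u + y ^ u := by
  rw [rpow_add hx, rpow_add hy, rpow_sub hx, rpow_sub hy, rpow_neg hx.le, rpow_neg hy.le,
    div_eq_mul_inv (x ^ u), div_eq_mul_inv (y ^ u)]
  exact weighted_mean_add_weighted_mean_inv (by positivity) (by positivity) (by positivity)

theorem power_mean_invariance_general (u v : ℝ) (x y : ℝ) (hx : 0 < x) (hy : 0 < y) :
    ((x ^ (u + v) + y ^ (u + v)) / (2 * (x ^ v + y ^ v)) +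
      (x ^ (u - v) + y ^ (u - v)) / (2 * (x ^ (-v) + y ^ (-v))) = (x ^ u + y ^ u) / 2) ∧
    (u + v ≠ v → u - v ≠ -v →
      gini u 0 (gini (u + v) v x y) (gini (u - v) (-v) x y) = gini u 0 x y) := by
  have key := rpow_add_div_add_rpow_sub_div_add u v hx hy
  refine ⟨?_, fun hplus hminus => ?_⟩
  · rw [div_mul_eq_div_div_swap, div_mul_eq_div_div_swap, ← add_div, key]
  · have hG₁ := gini_rpow_sub hplus hx.le hy.le
    have hG₂ := gini_rpow_sub hminus hx.le hy.le
    rw [add_sub_cancel_right] at hG₁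
    rw [sub_neg_eq_add, sub_add_cancel] at hG₂
    rw [gini_zero_right, gini_zero_right, hG₁, hG₂, key]

theorem power_mean_invariance (u v : ℝ) (hu : u ≠ 0) (x y : ℝ) (hx : 0 < x) (hy : 0 < y) :
    ((x ^ (u + v) + y ^ (u + v)) / (2 * (x ^ v + y ^ v)) +
      (x ^ (u - v) + y ^ (u - v)) / (2 * (x ^ (-v) + y ^ (-v))) = (x ^ u + y ^ u) / 2) ∧
    (u + v ≠ v → u - v ≠ -v →
      gini u 0 (gini (u + v) v x y) (gini (u - v) (-v) x y) = gini u 0 x y) :=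
  power_mean_invariance_general u v x y hx hy
end

section
/- Let a ≠ b and c ≠ d be real numbers. If G_{a,b}(x,y) · G_{c,d}(x,y) = xy for all positive reals x, y, then either a+b = 0 and c+d = 0, or {a,b} = {-c,-d}. -/
open Real

theorem sum_mul_deriv_comp_mul_eq_zero {ι : Type*} (s : Finset ι) (w p : ι → ℝ)
    {f f' : ℝ → ℝ} (hf : ∀ u, HasDerivAt f (f' u) u)
    (h : ∀ t, ∑ i ∈ s, w i * f (p i * t) = 0) (t : ℝ) :
    ∑ i ∈ s, w i * p i * f' (p i * t) = 0 := by
  have hderiv : HasDerivAt (fun t ↦ ∑ i ∈ s, w i * f (p i * t))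
      (∑ i ∈ s, w i * (f' (p i * t) * p i)) t :=
    HasDerivAt.fun_sum fun i _ ↦
      (((hf _).comp t ((hasDerivAt_id t).const_mul (p i))).const_mul _).congr_deriv (by simp)
  have hzero : (fun t ↦ ∑ i ∈ s, w i * f (p i * t)) = fun _ ↦ 0 := funext h
  rw [hzero] at hderiv
  rw [(hasDerivAt_const t (0 : ℝ)).unique hderiv]
  exact Finset.sum_congr rfl fun i _ ↦ by ring

theorem Real.hasDerivAt_tanh (x : ℝ) : HasDerivAt tanh (1 - tanh x ^ 2) x := by
  have hc := (cosh_pos x).ne'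
  have h := (hasDerivAt_sinh x).div (hasDerivAt_cosh x) hc
  rw [show (sinh / cosh : ℝ → ℝ) = tanh from funext fun y ↦ (tanh_eq_sinh_div_cosh y).symm] at h
  refine h.congr_deriv ?_
  rw [tanh_eq_sinh_div_cosh]
  field_simp

theorem Real.hasDerivAt_log_cosh (x : ℝ) : HasDerivAt (fun x ↦ log (cosh x)) (tanh x) x := by
  simpa [tanh_eq_sinh_div_cosh] using (hasDerivAt_cosh x).log (cosh_pos x).ne'

theorem hasDerivAt_one_sub_tanh_sq (x : ℝ) :
    HasDerivAt (fun x ↦ 1 - tanh x ^ 2) (-2 * tanh x * (1 - tanh x ^ 2)) x := by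
  refine (((hasDerivAt_tanh x).fun_pow 2).const_sub 1).congr_deriv ?_
  push_cast
  ring

theorem hasDerivAt_neg_two_mul_tanh_mul_one_sub_tanh_sq (x : ℝ) :
    HasDerivAt (fun x ↦ -2 * tanh x * (1 - tanh x ^ 2))
      (-2 * (1 - tanh x ^ 2) * (1 - 3 * tanh x ^ 2)) x := by
  refine (((hasDerivAt_tanh x).const_mul (-2)).mul (hasDerivAt_one_sub_tanh_sq x)).congr_deriv ?_
  ring

theorem gini_pos (p q : ℝ) {x y : ℝ} (hx : 0 < x) (hy : 0 < y) : 0 < gini p q x y := by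
  unfold gini; positivity

theorem gini_exp_exp_neg (p q t : ℝ) :
    gini p q (exp t) (exp (-t)) = (cosh (p * t) / cosh (q * t)) ^ (1 / (p - q)) := by
  simp only [gini, ← exp_mul, cosh_eq]
  congr 1
  field_simp

theorem log_gini_exp_exp_neg (p q t : ℝ) :
    log (gini p q (exp t) (exp (-t))) = (log (cosh (p * t)) - log (cosh (q * t))) / (p - q) := by
  rw [gini_exp_exp_neg, log_rpow (div_pos (cosh_pos _) (cosh_pos _)),
    log_div (cosh_pos _).ne' (cosh_pos _).ne', one_div_mul_eq_div]

theorem pair_eq_neg_pair_of_moments {a b c d : ℝ} (hab : a ≠ b) (hcd : c ≠ d)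
    (h2 : (c - d) * (a ^ 2 - b ^ 2) + (a - b) * (c ^ 2 - d ^ 2) = 0)
    (h4 : (c - d) * (a ^ 4 - b ^ 4) + (a - b) * (c ^ 4 - d ^ 4) = 0) :
    (a + b = 0 ∧ c + d = 0) ∨ ({a, b} : Set ℝ) = {-c, -d} := by
  have hab' : a - b ≠ 0 := sub_ne_zero.mpr hab
  have hcd' : c - d ≠ 0 := sub_ne_zero.mpr hcd
  have hsum : a + b + c + d = 0 := by
    refine (mul_eq_zero.mp ?_).resolve_left (mul_ne_zero hab' hcd')
    linear_combination h2
  have hcube : (a + b) * (a ^ 2 + b ^ 2 - c ^ 2 - d ^ 2) = 0 := by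
    refine (mul_eq_zero.mp ?_).resolve_left (mul_ne_zero hab' hcd')
    linear_combination h4 - (a - b) * (c - d) * (c ^ 2 + d ^ 2) * hsum
  rcases mul_eq_zero.mp hcube with hs | hsq
  · exact Or.inl ⟨hs, by linarith⟩
  -- `{a, b}` and `{-c, -d}` now have the same sum and the same product.
  right
  have hprod : c * d = a * b := by linear_combination (c + d - a - b) / 2 * hsum + hsq / 2
  have ha : (a + c) * (a + d) = 0 := by linear_combination a * hsum + hprod
  have hb : (b + c) * (b + d) = 0 := by linear_combination b * hsum + hprod
  rcases mul_eq_zero.mp ha with ha | ha <;> rcases mul_eq_zero.mp hb with hb | hb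
  · exact absurd (by linarith) hab
  · rw [show a = -c by linarith, show b = -d by linarith]
  · rw [show a = -d by linarith, show b = -c by linarith, Set.pair_comm]
  · exact absurd (by linarith) hab

theorem geom_invariance_necessity (a b c d : ℝ) (hab : a ≠ b) (hcd : c ≠ d)
    (h : ∀ x y : ℝ, 0 < x → 0 < y → gini a b x y * gini c d x y = x * y) :
    (a + b = 0 ∧ c + d = 0) ∨ ({a, b} : Set ℝ) = {-c, -d} := by
  set w : Fin 4 → ℝ := ![c - d, d - c, a - b, b - a]
  set p : Fin 4 → ℝ := ![a, b, c, d]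
  have hlog : ∀ t, ∑ i, w i * log (cosh (p i * t)) = 0 := by
    intro t
    have ht := congrArg log (h _ _ (exp_pos t) (exp_pos (-t)))
    rw [log_mul (gini_pos _ _ (exp_pos _) (exp_pos _)).ne'
        (gini_pos _ _ (exp_pos _) (exp_pos _)).ne',
      log_gini_exp_exp_neg, log_gini_exp_exp_neg, ← exp_add, add_neg_cancel, exp_zero, log_one,
      div_add_div _ _ (sub_ne_zero.mpr hab) (sub_ne_zero.mpr hcd), div_eq_zero_iff] at ht
    simp only [Fin.sum_univ_four, Matrix.cons_val_zero, Matrix.cons_val_one, Matrix.cons_val, w, p]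
    linear_combination ht.resolve_right (mul_ne_zero (sub_ne_zero.mpr hab) (sub_ne_zero.mpr hcd))
  have d1 := sum_mul_deriv_comp_mul_eq_zero _ _ _ hasDerivAt_log_cosh hlog
  have d2 := sum_mul_deriv_comp_mul_eq_zero _ _ _ hasDerivAt_tanh d1
  have d3 := sum_mul_deriv_comp_mul_eq_zero _ _ _ hasDerivAt_one_sub_tanh_sq d2
  have d4 := sum_mul_deriv_comp_mul_eq_zero _ _ _ hasDerivAt_neg_two_mul_tanh_mul_one_sub_tanh_sq d3
  refine pair_eq_neg_pair_of_moments hab hcd ?_ ?_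
  · have := d2 0
    simp only [Fin.sum_univ_four, Matrix.cons_val_zero, Matrix.cons_val_one, Matrix.cons_val, w, p,
      mul_zero, tanh_zero] at this
    linear_combination this
  · have := d4 0
    simp only [Fin.sum_univ_four, Matrix.cons_val_zero, Matrix.cons_val_one, Matrix.cons_val, w, p,
      mul_zero, tanh_zero] at this
    linear_combination -this / 2
end

section
/- Let a ≠ b and c ≠ d be real numbers. Then G_{a,b}(x,y) = G_{c,d}(x,y) for all positive reals x, y if and only if either a+b = c+d = 0 (in which case both means are the geometric mean) or {a,b} = {c,d}. -/
open Real Polynomial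

theorem gini_comm (p q : ℝ) {x y : ℝ} (hx : 0 < x) (hy : 0 < y) :
    gini p q x y = gini q p x y := by
  rw [gini, gini, ← inv_div, inv_rpow (by positivity), ← rpow_neg (by positivity),
    ← one_div_neg_eq_neg_one_div, neg_sub]

theorem gini_neg_right {p : ℝ} (hp : p ≠ 0) {x y : ℝ} (hx : 0 < x) (hy : 0 < y) :
    gini p (-p) x y = √(x * y) := by
  have hquot : (x ^ p + y ^ p) / (x ^ (-p) + y ^ (-p)) = (x * y) ^ p := by
    rw [rpow_neg hx.le, rpow_neg hy.le, mul_rpow hx.le hy.le]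
    field_simp
    ring
  have hexp : 1 / (p - -p) = p⁻¹ * (1 / 2) := by field_simp; ring
  rw [gini, hquot, hexp, rpow_mul (by positivity), rpow_rpow_inv (by positivity) hp,
    sqrt_eq_rpow]

theorem pair_eq_pair_of_add_eq_of_mul_eq {R : Type*} [CommRing R] [NoZeroDivisors R]
    {a b c d : R} (hsum : a + b = c + d) (hprod : a * b = c * d) : ({a, b} : Set R) = {c, d} := by
  have hroot : (a - c) * (a - d) = 0 := by linear_combination a * hsum - hprod
  rcases mul_eq_zero.1 hroot with hac | had
  · exact Set.pair_eq_pair_iff.2 (.inl ⟨sub_eq_zero.1 hac, by linear_combination hsum - hac⟩)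
  · exact Set.pair_eq_pair_iff.2 (.inr ⟨sub_eq_zero.1 had, by linear_combination hsum - had⟩)

theorem add_eq_zero_or_pair_eq_pair {a b c d : ℝ} (hsum : a + b = c + d)
    (hcube : (a + b) * (a ^ 2 + b ^ 2) = (c + d) * (c ^ 2 + d ^ 2)) :
    (a + b = 0 ∧ c + d = 0) ∨ ({a, b} : Set ℝ) = {c, d} := by
  by_cases h0 : a + b = 0
  · exact .inl ⟨h0, hsum ▸ h0⟩
  have hsq : a ^ 2 + b ^ 2 = c ^ 2 + d ^ 2 := mul_left_cancel₀ h0 (hsum ▸ hcube)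
  have hprod : a * b = c * d := by linear_combination (a + b + c + d) / 2 * hsum - hsq / 2
  exact .inr (pair_eq_pair_of_add_eq_of_mul_eq hsum hprod)

noncomputable def softplus (x : ℝ) : ℝ := log (1 + exp x)

theorem hasDerivAt_softplus (x : ℝ) : HasDerivAt softplus (sigmoid x) x := by
  refine (((hasDerivAt_exp x).const_add 1).log (by positivity)).congr_deriv ?_
  rw [sigmoid_def, exp_neg]
  field_simp
  ring

theorem contDiff_softplus : ContDiff ℝ ⊤ softplus :=
  (contDiff_const.add contDiff_exp).log fun x => by positivity

noncomputable def sigmoidDerivPoly : ℕ → ℝ[X]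
  | 0 => X
  | n + 1 => derivative (sigmoidDerivPoly n) * (X - X ^ 2)

theorem iteratedDeriv_sigmoid (n : ℕ) :
    iteratedDeriv n sigmoid = fun x => (sigmoidDerivPoly n).eval (sigmoid x) := by
  induction n with
  | zero => simp [sigmoidDerivPoly]
  | succ n ih =>
    rw [iteratedDeriv_succ, ih]
    funext x
    have hP := ((sigmoidDerivPoly n).hasDerivAt (sigmoid x)).comp x (hasDerivAt_sigmoid x)
    rw [Function.comp_def] at hP
    rw [hP.deriv, sigmoidDerivPoly, eval_mul, eval_sub, eval_pow, eval_X]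
    ring

theorem iteratedDeriv_succ_softplus (n : ℕ) :
    iteratedDeriv (n + 1) softplus = iteratedDeriv n sigmoid := by
  rw [iteratedDeriv_succ', funext fun x => (hasDerivAt_softplus x).deriv]

theorem iteratedDeriv_two_softplus_zero : iteratedDeriv 2 softplus 0 = 1 / 4 := by
  rw [iteratedDeriv_succ_softplus, iteratedDeriv_sigmoid]
  norm_num [sigmoidDerivPoly, sigmoid_zero]

theorem iteratedDeriv_four_softplus_zero : iteratedDeriv 4 softplus 0 = -1 / 8 := by
  rw [iteratedDeriv_succ_softplus, iteratedDeriv_sigmoid]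
  norm_num [sigmoidDerivPoly, sigmoid_zero]

theorem log_gini_exp_one (p q t : ℝ) :
    log (gini p q (exp t) 1) = (softplus (p * t) - softplus (q * t)) / (p - q) := by
  have hpow (r : ℝ) : exp t ^ r = exp (r * t) := by rw [← exp_mul, mul_comm]
  rw [gini, one_rpow, one_rpow, hpow, hpow, log_rpow (by positivity),
    log_div (by positivity) (by positivity), softplus, softplus, add_comm 1, add_comm 1]
  ring

theorem iteratedDeriv_divided_difference_zero {f : ℝ → ℝ} (hf : ContDiff ℝ ⊤ f) (n : ℕ)
    (p q : ℝ) :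
    iteratedDeriv n (fun t => (f (p * t) - f (q * t)) / (p - q)) 0
      = (p ^ n - q ^ n) / (p - q) * iteratedDeriv n f 0 := by
  have hscale (r : ℝ) : ContDiffAt ℝ n (fun t => f (r * t)) 0 :=
    ((hf.of_le le_top).comp (contDiff_const.mul contDiff_id)).contDiffAt
  rw [iteratedDeriv_div_const, iteratedDeriv_fun_sub (hscale p) (hscale q),
    iteratedDeriv_comp_const_mul (hf.of_le le_top), iteratedDeriv_comp_const_mul (hf.of_le le_top)]
  simp only [mul_zero]
  ring

theorem add_eq_and_cube_eq_of_gini_eq {a b c d : ℝ} (hab : a ≠ b) (hcd : c ≠ d)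
    (h : ∀ x y : ℝ, 0 < x → 0 < y → gini a b x y = gini c d x y) :
    a + b = c + d ∧ (a + b) * (a ^ 2 + b ^ 2) = (c + d) * (c ^ 2 + d ^ 2) := by
  have hlog : (fun t => (softplus (a * t) - softplus (b * t)) / (a - b))
      = fun t => (softplus (c * t) - softplus (d * t)) / (c - d) := funext fun t => by
    rw [← log_gini_exp_one, ← log_gini_exp_one, h _ _ (exp_pos t) one_pos]
  have hderiv (n : ℕ) : (a ^ n - b ^ n) / (a - b) * iteratedDeriv n softplus 0
      = (c ^ n - d ^ n) / (c - d) * iteratedDeriv n softplus 0 := by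
    rw [← iteratedDeriv_divided_difference_zero contDiff_softplus,
      ← iteratedDeriv_divided_difference_zero contDiff_softplus, hlog]
  have hdiv {p q : ℝ} (hpq : p ≠ q) :
      (p ^ 2 - q ^ 2) / (p - q) = p + q ∧
        (p ^ 4 - q ^ 4) / (p - q) = (p + q) * (p ^ 2 + q ^ 2) := by
    constructor <;> rw [div_eq_iff (sub_ne_zero.2 hpq)] <;> ring
  have h2 := hderiv 2
  have h4 := hderiv 4
  rw [iteratedDeriv_two_softplus_zero, (hdiv hab).1, (hdiv hcd).1] at h2
  rw [iteratedDeriv_four_softplus_zero, (hdiv hab).2, (hdiv hcd).2] at h4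
  constructor <;> linarith

theorem gini_equality_characterization (a b c d : ℝ) (hab : a ≠ b) (hcd : c ≠ d) :
    (∀ x y : ℝ, 0 < x → 0 < y → gini a b x y = gini c d x y) ↔
      (a + b = 0 ∧ c + d = 0) ∨ ({a, b} : Set ℝ) = {c, d} := by
  constructor
  · intro h
    obtain ⟨hsum, hcube⟩ := add_eq_and_cube_eq_of_gini_eq hab hcd h
    exact add_eq_zero_or_pair_eq_pair hsum hcube
  · rintro (⟨hab0, hcd0⟩ | hpair) x y hx hy
    · have ha : a ≠ 0 := fun ha => hab (by linarith)
      have hc : c ≠ 0 := fun hc => hcd (by linarith)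
      rw [eq_neg_of_add_eq_zero_right hab0, eq_neg_of_add_eq_zero_right hcd0,
        gini_neg_right ha hx hy, gini_neg_right hc hx hy]
    · rcases Set.pair_eq_pair_iff.1 hpair with ⟨rfl, rfl⟩ | ⟨rfl, rfl⟩
      · rfl
      · exact gini_comm _ _ hx hy
end

section
/- Let v be a real number with v ≠ 1 and v ≠ -1 and v ≠ 0. Then G_{1+v,v}(x,y) + G_{1-v,-v}(x,y) = x + y for all positive reals x, y, i.e., the pair (G_{1+v,v}, G_{1-v,-v}) solves the Matkowski–Sutô equation. -/
/-! With `a = x ^ v` and `b = y ^ v`, the mean `G_{1+v,v}` is the weighted arithmetic mean of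
`x, y` with weights `a, b`, and `G_{1-v,-v}` is the one with weights `a⁻¹, b⁻¹`, i.e. `b, a`.
Two weighted means with swapped weights add up to `x + y`. -/

open Real

lemma gini_one_add_self (q : ℝ) {x y : ℝ} (hx : 0 < x) (hy : 0 < y) :
    gini (1 + q) q x y = (x * x ^ q + y * y ^ q) / (x ^ q + y ^ q) := by
  rw [gini, add_sub_cancel_right, div_one, rpow_one, rpow_add hx, rpow_add hy, rpow_one,
    rpow_one]

lemma weighted_mean_add_weighted_mean_inv_s15 {a b : ℝ} (ha : 0 < a) (hb : 0 < b) (x y : ℝ) :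
    (x * a + y * b) / (a + b) + (x * a⁻¹ + y * b⁻¹) / (a⁻¹ + b⁻¹) = x + y := by
  field_simp
  ring

theorem matkowski_suto_family_general (v : ℝ)
    (x y : ℝ) (hx : 0 < x) (hy : 0 < y) :
    gini (1 + v) v x y + gini (1 - v) (-v) x y = x + y := by
  rw [gini_one_add_self v hx hy, sub_eq_add_neg, gini_one_add_self (-v) hx hy, rpow_neg hx.le,
    rpow_neg hy.le]
  exact weighted_mean_add_weighted_mean_inv_s15 (rpow_pos_of_pos hx v) (rpow_pos_of_pos hy v) x y

theorem matkowski_suto_family (v : ℝ) (hv1 : v ≠ 1) (hv2 : v ≠ -1) (hv0 : v ≠ 0)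
    (x y : ℝ) (hx : 0 < x) (hy : 0 < y) :
    gini (1 + v) v x y + gini (1 - v) (-v) x y = x + y :=
  matkowski_suto_family_general v x y hx hy
end

section
/- Let M, N : ℝ₊² → ℝ₊ be strict means (continuous, with min(x,y) < M(x,y) < max(x,y) for x ≠ y, and likewise for N). Define the Gauss iteration x₁ = x, y₁ = y, x_{n+1} = M(x_n, y_n), y_{n+1} = N(x_n, y_n). Then the sequences (x_n) and (y_n) converge to a common limit. -/
/-- `M` is a strict mean on the positive reals: continuous on the open positive quadrant,
between `min` and `max`, with strict inequalities when the arguments differ. -/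
structure IsStrictMean (M : ℝ → ℝ → ℝ) : Prop where
  continuous : ContinuousOn (fun p : ℝ × ℝ => M p.1 p.2) (Set.Ioi 0 ×ˢ Set.Ioi 0)
  mean : ∀ x y : ℝ, 0 < x → 0 < y → min x y ≤ M x y ∧ M x y ≤ max x y
  strict : ∀ x y : ℝ, 0 < x → 0 < y → x ≠ y → min x y < M x y ∧ M x y < max x y

/-!
The spread `|x - y|` is a Lyapunov function for the Gauss map `(x, y) ↦ (M x y, N x y)`:
it never increases, and decreases strictly off the diagonal. The orbit stays in a compact
square, so at any cluster point `p` of the orbit the spread of `p` and of its image both equal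
the limiting spread; strictness forces `p` onto the diagonal, hence the spread tends to `0`.
Since `min xₙ yₙ` is nondecreasing and bounded, it converges, and both sequences follow it.
-/

open Filter Topology Set

theorem IsCompact.exists_tendsto_lyapunov_orbit {X : Type*} [TopologicalSpace X]
    [FirstCountableTopology X] {K : Set X} (hK : IsCompact K) {f : X → X} (hf : ContinuousOn f K)
    {V : X → ℝ} (hV : Continuous V) (hVf : ∀ p ∈ K, V (f p) ≤ V p)
    {u : ℕ → X} (hu : ∀ n, u (n + 1) = f (u n)) (huK : ∀ n, u n ∈ K) :
    ∃ p ∈ K, V (f p) = V p ∧ Tendsto (fun n => V (u n)) atTop (𝓝 (V p)) := by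
  have hanti : Antitone (fun n => V (u n)) :=
    antitone_nat_of_succ_le fun n => hu n ▸ hVf _ (huK n)
  have hbdd : BddBelow (range fun n => V (u n)) :=
    (hK.bddBelow_image hV.continuousOn).mono <|
      range_subset_iff.2 fun n => mem_image_of_mem V (huK n)
  obtain ⟨p, hpK, φ, hφ, hup⟩ := hK.tendsto_subseq huK
  have hlim := tendsto_atTop_ciInf hanti hbdd
  have hVp : V p = ⨅ n, V (u n) :=
    tendsto_nhds_unique ((hV.tendsto p).comp hup) (hlim.comp hφ.tendsto_atTop)
  have hVfp : V (f p) = ⨅ n, V (u n) := by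
    have hfu : Tendsto (fun k => f (u (φ k))) atTop (𝓝 (f p)) :=
      (hf p hpK).tendsto.comp (tendsto_nhdsWithin_iff.2 ⟨hup, .of_forall fun k => huK _⟩)
    refine tendsto_nhds_unique ((hV.tendsto _).comp hfu) ?_
    simp_rw [← hu]
    exact hlim.comp ((tendsto_add_atTop_nat 1).comp hφ.tendsto_atTop)
  exact ⟨p, hpK, hVfp.trans hVp.symm, hVp ▸ hlim⟩

theorem abs_sub_lt_abs_sub_of_mem_Ioo {a b x y : ℝ} (ha : a ∈ Ioo (min x y) (max x y))
    (hb : b ∈ Ioo (min x y) (max x y)) : |a - b| < |x - y| := by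
  rw [abs_sub_lt_iff]
  constructor <;> linarith [ha.1, ha.2, hb.1, hb.2, max_sub_min_eq_abs' x y]

theorem tendsto_of_tendsto_min_of_tendsto_abs_sub {ι : Type*} {l : Filter ι} {a b : ι → ℝ}
    {L : ℝ} (hmin : Tendsto (fun i => min (a i) (b i)) l (𝓝 L))
    (habs : Tendsto (fun i => |a i - b i|) l (𝓝 0)) :
    Tendsto a l (𝓝 L) ∧ Tendsto b l (𝓝 L) := by
  have hmax : Tendsto (fun i => max (a i) (b i)) l (𝓝 L) := by
    simpa [← max_sub_min_eq_abs'] using hmin.add habs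
  exact ⟨tendsto_of_tendsto_of_tendsto_of_le_of_le hmin hmax (fun _ => min_le_left _ _)
      fun _ => le_max_left _ _,
    tendsto_of_tendsto_of_tendsto_of_le_of_le hmin hmax (fun _ => min_le_right _ _)
      fun _ => le_max_right _ _⟩

def gaussMap (M N : ℝ → ℝ → ℝ) (p : ℝ × ℝ) : ℝ × ℝ := (M p.1 p.2, N p.1 p.2)

theorem IsStrictMean.mem_Icc {M : ℝ → ℝ → ℝ} (hM : IsStrictMean M) {a b x y : ℝ}
    (ha : 0 < a) (hx : x ∈ Icc a b) (hy : y ∈ Icc a b) : M x y ∈ Icc a b :=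
  have hmean := hM.mean x y (ha.trans_le hx.1) (ha.trans_le hy.1)
  ⟨(le_min hx.1 hy.1).trans hmean.1, hmean.2.trans (max_le hx.2 hy.2)⟩

section GaussMap

variable {M N : ℝ → ℝ → ℝ}

theorem mapsTo_gaussMap (hM : IsStrictMean M) (hN : IsStrictMean N) {a b : ℝ} (ha : 0 < a) :
    MapsTo (gaussMap M N) (Icc a b ×ˢ Icc a b) (Icc a b ×ˢ Icc a b) :=
  fun _ hp => ⟨hM.mem_Icc ha hp.1 hp.2, hN.mem_Icc ha hp.1 hp.2⟩

theorem continuousOn_gaussMap (hM : IsStrictMean M) (hN : IsStrictMean N) :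
    ContinuousOn (gaussMap M N) (Ioi 0 ×ˢ Ioi 0) :=
  hM.continuous.prodMk hN.continuous

theorem abs_sub_gaussMap_le (hM : IsStrictMean M) (hN : IsStrictMean N) {p : ℝ × ℝ}
    (hp : p ∈ Ioi 0 ×ˢ Ioi 0) : |(gaussMap M N p).1 - (gaussMap M N p).2| ≤ |p.1 - p.2| :=
  (abs_sub_comm _ _).trans_le <| (abs_sub_le_of_uIcc_subset_uIcc <|
    uIcc_subset_uIcc (hM.mean _ _ hp.1 hp.2) (hN.mean _ _ hp.1 hp.2)).trans_eq (abs_sub_comm _ _)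

theorem abs_sub_gaussMap_lt (hM : IsStrictMean M) (hN : IsStrictMean N) {p : ℝ × ℝ}
    (hp : p ∈ Ioi 0 ×ˢ Ioi 0) (hne : p.1 ≠ p.2) :
    |(gaussMap M N p).1 - (gaussMap M N p).2| < |p.1 - p.2| :=
  abs_sub_lt_abs_sub_of_mem_Ioo (hM.strict _ _ hp.1 hp.2 hne) (hN.strict _ _ hp.1 hp.2 hne)

theorem min_le_min_gaussMap (hM : IsStrictMean M) (hN : IsStrictMean N) {p : ℝ × ℝ}
    (hp : p ∈ Ioi 0 ×ˢ Ioi 0) : min p.1 p.2 ≤ min (gaussMap M N p).1 (gaussMap M N p).2 :=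
  le_min (hM.mean _ _ hp.1 hp.2).1 (hN.mean _ _ hp.1 hp.2).1

end GaussMap

theorem gauss_iteration_converges (M N : ℝ → ℝ → ℝ)
    (hM : IsStrictMean M) (hN : IsStrictMean N)
    (x y : ℝ) (hx : 0 < x) (hy : 0 < y)
    (xs ys : ℕ → ℝ) (hx0 : xs 0 = x) (hy0 : ys 0 = y)
    (hxs : ∀ n, xs (n + 1) = M (xs n) (ys n))
    (hys : ∀ n, ys (n + 1) = N (xs n) (ys n)) :
    ∃ L : ℝ, Filter.Tendsto xs Filter.atTop (nhds L) ∧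
      Filter.Tendsto ys Filter.atTop (nhds L) := by
  set u : ℕ → ℝ × ℝ := fun n => (xs n, ys n)
  set K := Icc (min x y) (max x y) ×ˢ Icc (min x y) (max x y)
  have hmin : 0 < min x y := lt_min hx hy
  have hKpos : K ⊆ Ioi 0 ×ˢ Ioi 0 :=
    prod_mono (fun _ hz => hmin.trans_le hz.1) fun _ hz => hmin.trans_le hz.1
  have hu : ∀ n, u (n + 1) = gaussMap M N (u n) := fun n => by simp [u, gaussMap, hxs, hys]
  have huK : ∀ n, u n ∈ K := fun n => by
    induction n with
    | zero => simp [u, K, hx0, hy0]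
    | succ n ih => exact hu n ▸ mapsTo_gaussMap hM hN hmin ih
  obtain ⟨p, hpK, hspread, hlim⟩ :=
    (isCompact_Icc.prod isCompact_Icc).exists_tendsto_lyapunov_orbit
    (V := fun q => |q.1 - q.2|) ((continuousOn_gaussMap hM hN).mono hKpos) (by fun_prop)
    (fun q hq => abs_sub_gaussMap_le hM hN (hKpos hq)) hu huK
  have hdiag : p.1 = p.2 :=
    by_contra fun hne => (abs_sub_gaussMap_lt hM hN (hKpos hpK) hne).ne hspread
  rw [hdiag, sub_self, abs_zero] at hlim
  have hmono : Monotone fun n => min (xs n) (ys n) :=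
    monotone_nat_of_le_succ fun n => by
      rw [hxs, hys]
      exact min_le_min_gaussMap hM hN (hKpos (huK n))
  have hbdd : BddAbove (range fun n => min (xs n) (ys n)) :=
    ⟨max x y, by rintro _ ⟨n, rfl⟩; exact (min_le_left _ _).trans (huK n).1.2⟩
  exact ⟨_, tendsto_of_tendsto_min_of_tendsto_abs_sub (tendsto_atTop_ciSup hmono hbdd) hlim⟩
end
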